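/- (The second-price single-item auction is weakly (1, 0, 1)-smooth.) For every n ≥ 1, every value profile v ∈ [0,∞)^n and every bid profile b ∈ [0,∞)^n, the deterministic deviation profile b* in which the least index i* maximizing v_i bids b*_{i*} = v_{i*} and every other bidder bids 0 satisfies Σ_{i=1}^n u_i^{v_i}(b_{−i}; b*_i) ≥ max_i v_i − max_i b_i; here max_i b_i equals the sum over players of their willingness-to-pay for their allocation at b (the winner's willingness-to-pay equals his own bid, and each loser's is 0). -/
import Mathlib

noncomputable def argmaxLeast {n : ℕ} (f : Fin (n + 1) → ℝ) : Fin (n + 1) :=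
  (Finset.univ.filter fun i => ∀ j, f j ≤ f i).min' (by
    obtain ⟨i, -, hi⟩ := Finset.exists_max_image (Finset.univ : Finset (Fin (n + 1))) f
      Finset.univ_nonempty
    exact ⟨i, Finset.mem_filter.mpr ⟨Finset.mem_univ i, fun j => hi j (Finset.mem_univ j)⟩⟩)

noncomputable def maxOther {n : ℕ} (b : Fin (n + 1) → ℝ) (i : Fin (n + 1)) : ℝ :=
  Finset.univ.sup' Finset.univ_nonempty fun j => if j = i then 0 else b j

noncomputable def spUtility {n : ℕ} (vi : ℝ) (b : Fin (n + 1) → ℝ) (i : Fin (n + 1)) : ℝ :=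
  if argmaxLeast b = i then vi - maxOther b i else 0

lemma argmax_spec {n : ℕ} (f : Fin (n + 1) → ℝ) : ∀ j, f j ≤ f (argmaxLeast f) := by
  have h := Finset.min'_mem (Finset.univ.filter fun i => ∀ j, f j ≤ f i) (by
    obtain ⟨i, -, hi⟩ := Finset.exists_max_image (Finset.univ : Finset (Fin (n + 1))) f
      Finset.univ_nonempty
    exact ⟨i, Finset.mem_filter.mpr ⟨Finset.mem_univ i, fun j => hi j (Finset.mem_univ j)⟩⟩)
  exact (Finset.mem_filter.mp h).2

/-- the second-price single-item auction is weakly `(1, 0, 1)`-smooth via the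
deterministic deviation in which the least index `i*` maximizing `v` bids `v i*` and everyone
else bids `0`; moreover `max_i b_i` equals the total willingness-to-pay at `b` (the winner's
willingness-to-pay is her own bid and each loser's is `0`). -/
theorem stmt_17 (n : ℕ) (v b : Fin (n + 1) → ℝ)
    (hv : ∀ i, 0 ≤ v i) (hb : ∀ i, 0 ≤ b i) :
    (Finset.univ.sup' Finset.univ_nonempty v -
        Finset.univ.sup' Finset.univ_nonempty b ≤
      ∑ i, spUtility (v i)
        (Function.update b i (if i = argmaxLeast v then v (argmaxLeast v) else 0)) i) ∧
    Finset.univ.sup' Finset.univ_nonempty b =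
      ∑ i, (if argmaxLeast b = i then b i else 0) := by
  set istar := argmaxLeast v with histar
  set bid : Fin (n + 1) → ℝ := fun i => if i = istar then v istar else 0 with hbid
  set B : Fin (n + 1) → Fin (n + 1) → ℝ := fun i => Function.update b i (bid i) with hB
  have hBii : ∀ i, B i i = bid i := fun i => Function.update_self i (bid i) b
  have hBij : ∀ i j, j ≠ i → B i j = b j := fun i j h => Function.update_of_ne h _ _
  have hbidnn : ∀ i, 0 ≤ bid i := by
    intro i; simp only [hbid]; split_ifs <;> [exact hv istar; exact le_refl 0]
  have hbidle : ∀ i, bid i ≤ v i := by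
    intro i; simp only [hbid]; split_ifs with h
    · rw [h]
    · exact hv i
  -- each summand is nonnegative
  have hnn : ∀ i, 0 ≤ spUtility (v i) (B i) i := by
    intro i
    unfold spUtility
    split_ifs with h
    · have hmo : maxOther (B i) i ≤ bid i := by
        apply Finset.sup'_le
        intro j _
        split_ifs with hj
        · exact hbidnn i
        · calc B i j ≤ B i (argmaxLeast (B i)) := argmax_spec (B i) j
            _ = B i i := by rw [h]
            _ = bid i := hBii i
      have := hbidle i
      linarith
    · exact le_refl 0
  have hsupb0 : (0 : ℝ) ≤ Finset.univ.sup' Finset.univ_nonempty b :=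
    le_trans (hb istar) (Finset.le_sup' b (Finset.mem_univ istar))
  have hsupv : Finset.univ.sup' Finset.univ_nonempty v = v istar :=
    le_antisymm (Finset.sup'_le _ _ fun j _ => argmax_spec v j)
      (Finset.le_sup' v (Finset.mem_univ istar))
  constructor
  · have hsingle : spUtility (v istar) (B istar) istar ≤
        ∑ i, spUtility (v i) (B i) i :=
      Finset.single_le_sum (fun i _ => hnn i) (Finset.mem_univ istar)
    have hkey : Finset.univ.sup' Finset.univ_nonempty v -
        Finset.univ.sup' Finset.univ_nonempty b ≤ spUtility (v istar) (B istar) istar := by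
      unfold spUtility
      split_ifs with h
      · have hmo : maxOther (B istar) istar ≤ Finset.univ.sup' Finset.univ_nonempty b := by
          apply Finset.sup'_le
          intro j _
          split_ifs with hj
          · exact hsupb0
          · rw [hBij istar j hj]
            exact Finset.le_sup' b (Finset.mem_univ j)
        rw [hsupv]
        linarith
      · -- istar loses: the winner w ≠ istar bids b w ≥ v istar
        set w := argmaxLeast (B istar) with hw
        have hvle : v istar ≤ Finset.univ.sup' Finset.univ_nonempty b := by
          calc v istar = B istar istar := by
                rw [hBii istar]; simp [hbid]
            _ ≤ B istar w := argmax_spec (B istar) istar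
            _ = b w := hBij istar w (fun hc => h (hc ▸ rfl))
            _ ≤ _ := Finset.le_sup' b (Finset.mem_univ w)
        rw [hsupv]
        linarith
    exact le_trans hkey hsingle
  · set w := argmaxLeast b with hw
    have hsum : ∑ i, (if argmaxLeast b = i then b i else 0) = b w := by
      rw [Finset.sum_ite_eq]
      simp [hw]
    rw [hsum]
    exact le_antisymm (Finset.sup'_le _ _ fun j _ => argmax_spec b j)
      (Finset.le_sup' b (Finset.mem_univ w))
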